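/- arXiv:1010.2446 — 2 statements merged into one kernel-verified Lean document; each statement's English description precedes it below -/
import Mathlib

section
/- Let A be a bounded subset of ℝ^d and let t ∈ ℝ^d be a translation vector. Then A △ (A+t) ⊆ ⋃ { ℓ(a, a+t) : a ∈ ∂A }, i.e. the symmetric difference of A and its translate A + t is contained in the union over all boundary points a of A of the line segments from a to a + t. -/
open MeasureTheory Set

open Set.Notation in
lemma aux_frontier_inter {X : Type*} [TopologicalSpace X] {s A : Set X}
    (hs : IsPreconnected s) (h1 : (s ∩ A).Nonempty) (h2 : (s \ A).Nonempty) :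
    (s ∩ frontier A).Nonempty := by
  by_contra h
  rw [Set.not_nonempty_iff_eq_empty] at h
  have hdisj : Disjoint (frontier (interior A)) s := by
    refine Set.disjoint_left.mpr fun x hx hxs => ?_
    have : x ∈ s ∩ frontier A := ⟨hxs, frontier_interior_subset hx⟩
    simp [h] at this
  have hclopen : IsClopen (s ↓∩ interior A) :=
    isClopen_preimage_val isOpen_interior hdisj
  haveI := Subtype.preconnectedSpace hs
  obtain ⟨x, hxs, hxA⟩ := h1
  have hxint : x ∈ interior A := by
    have hxcl : x ∈ closure A := subset_closure hxA
    rcases (closure_eq_interior_union_frontier A ▸ hxcl) with h' | h'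
    · exact h'
    · exact absurd (h ▸ (⟨hxs, h'⟩ : x ∈ s ∩ frontier A)) (Set.notMem_empty x)
  have huniv := hclopen.eq_univ ⟨⟨x, hxs⟩, hxint⟩
  obtain ⟨y, hys, hyA⟩ := h2
  have : (⟨y, hys⟩ : s) ∈ (s ↓∩ interior A) := huniv ▸ Set.mem_univ _
  exact hyA (interior_subset this)

/-- For a bounded set `A ⊆ ℝ^d` and a translation vector `t`, the symmetric
difference `A △ (A + t)` is covered by the union of the segments `ℓ(a, a + t)` over `a ∈ ∂A`. -/
theorem symmDiff_translate_subset_iUnion_segment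
    (d : ℕ) (A : Set (EuclideanSpace ℝ (Fin d))) (hA : Bornology.IsBounded A)
    (t : EuclideanSpace ℝ (Fin d)) :
    symmDiff A ((fun a => a + t) '' A) ⊆ ⋃ a ∈ frontier A, segment ℝ a (a + t) := by
  intro x hx
  have key : ((segment ℝ (x - t) x) ∩ A).Nonempty ∧
      ((segment ℝ (x - t) x) \ A).Nonempty := by
    rcases hx with ⟨hxA, hxB⟩ | ⟨⟨y, hyA, hyx⟩, hxA⟩
    · have hxt : x - t ∉ A := fun h => hxB ⟨x - t, h, by simp⟩
      exact ⟨⟨x, right_mem_segment ℝ _ _, hxA⟩, ⟨x - t, left_mem_segment ℝ _ _, hxt⟩⟩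
    · have hxt : x - t ∈ A := by
        have : y = x - t := by rw [← hyx]; simp
        rwa [← this]
      exact ⟨⟨x - t, left_mem_segment ℝ _ _, hxt⟩, ⟨x, right_mem_segment ℝ _ _, hxA⟩⟩
  obtain ⟨a, has, haf⟩ := aux_frontier_inter (convex_segment _ _).isPreconnected key.1 key.2
  obtain ⟨lam, mu, hlam, hmu, hsum, hax⟩ := has
  refine Set.mem_iUnion₂.mpr ⟨a, haf, mu, lam, hmu, hlam, by linarith, ?_⟩
  have : a = x - lam • t := by
    rw [← hax, smul_sub]
    have : lam + mu = 1 := hsum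
    rw [show (mu : ℝ) = 1 - lam by linarith]
    module
  rw [this]
  rw [show (mu : ℝ) = 1 - lam by linarith]
  module
end

section
/- Let A be a bounded subset of ℝ^d and let M ∈ SO(d) be a rotation matrix. Then A △ MA ⊆ ⋃ { ℓ(a, Ma) : a ∈ ∂A }, i.e. the symmetric difference of A and its rotated image MA is contained in the union over all boundary points a of A of the line segments from a to Ma. -/
/-!
For `x ∈ A \ L '' A`, solve `(1 - t) • a + t • L a = x` for `a = a(t)`, `t ∈ [0, 1]`. On the
orthogonal complement of the `-1`-eigenspace `E` of `L`, the operator `(1 - t) + t L` is invertible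
for every `t ∈ [0, 1]`. If `x ⊥ E`, the solution therefore runs continuously from `a(0) = x ∈ A` to
a point `a(1)` with `L a(1) = x`, which is not in `A`, so it crosses `frontier A`. Otherwise the
`E`-component of `a(t)` is `(1 - 2t)⁻¹` times that of `x`, so the path leaves the bounded set `A`
before `t = 1/2`. Points of `L '' A \ A` are handled by applying this to `L⁻¹`.
-/

open Set AffineMap Bornology Module.End

theorem IsPreconnected.inter_frontier_nonempty {X : Type*} [TopologicalSpace X] {s t : Set X}
    (hs : IsPreconnected s) (hst : (s ∩ t).Nonempty) (hs_not : ¬s ⊆ t) :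
    (s ∩ frontier t).Nonempty := by
  have := isPreconnected_iff_preconnectedSpace.mp hs
  obtain ⟨⟨x, hxs⟩, hx⟩ := (nonempty_frontier_iff (s := ((↑) : s → X) ⁻¹' t)).mpr
    ⟨let ⟨x, hxs, hxt⟩ := hst; ⟨⟨x, hxs⟩, hxt⟩, fun h => hs_not fun x hx => h.ge (mem_univ ⟨x, hx⟩)⟩
  exact ⟨x, hxs, continuous_subtype_val.frontier_preimage_subset t hx⟩

theorem exists_mem_frontier_mem_segment_of_continuousOn {E : Type*} [AddCommGroup E]
    [Module ℝ E] [TopologicalSpace E] {f : E → E} {A : Set E} {x : E} {s : Set ℝ} {g : ℝ → E}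
    (hs : IsPreconnected s) (hs_sub : s ⊆ Icc 0 1) (hg : ContinuousOn g s)
    (hgx : ∀ t ∈ s, lineMap (g t) (f (g t)) t = x) (hin : (g '' s ∩ A).Nonempty)
    (hout : ¬g '' s ⊆ A) : ∃ a ∈ frontier A, x ∈ segment ℝ a (f a) := by
  obtain ⟨_, ⟨t, hts, rfl⟩, hfr⟩ := (hs.image g hg).inter_frontier_nonempty hin hout
  exact ⟨g t, hfr, segment_eq_image_lineMap ℝ (g t) (f (g t)) ▸ ⟨t, hs_sub hts, hgx t hts⟩⟩

theorem exists_lt_inv_one_sub_two_mul (C : ℝ) : ∃ t ∈ Ico (0 : ℝ) (1 / 2), C < (1 - 2 * t)⁻¹ := by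
  refine ⟨1 / 2 - 1 / (2 * (|C| + 1)), ⟨?_, ?_⟩, ?_⟩
  · rw [sub_nonneg]
    exact div_le_div_of_nonneg_left zero_le_one two_pos (by linarith [abs_nonneg C])
  · have : 0 < 1 / (2 * (|C| + 1)) := by positivity
    linarith
  · have : 1 - 2 * (1 / 2 - 1 / (2 * (|C| + 1))) = (|C| + 1)⁻¹ := by
      field_simp; ring
    rw [this, inv_inv]
    linarith [le_abs_self C]

namespace LinearIsometry

variable {R E : Type*} [Ring R] [SeminormedAddCommGroup E] [Module R E]

def restrict (L : E →ₗᵢ[R] E) {p : Submodule R E} (hp : ∀ v ∈ p, L v ∈ p) : p →ₗᵢ[R] p :=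
  ⟨L.toLinearMap.restrict hp, fun v => L.norm_map v⟩

@[simp]
theorem coe_restrict_apply (L : E →ₗᵢ[R] E) {p : Submodule R E} (hp : ∀ v ∈ p, L v ∈ p) (v : p) :
    (L.restrict hp v : E) = L v :=
  rfl

end LinearIsometry

theorem LinearIsometry.eq_zero_of_lineMap_eq_zero {W : Type*} [NormedAddCommGroup W]
    [NormedSpace ℝ W] (L : W →ₗᵢ[ℝ] W) (hL : ∀ w, L w = -w → w = 0) {t : ℝ} (ht : t ∈ Icc 0 1)
    {w : W} (hw : lineMap w (L w) t = 0) : w = 0 := by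
  rw [lineMap_apply_module] at hw
  have hnorm : (1 - 2 * t) * ‖w‖ = 0 := by
    have := congrArg norm (eq_neg_of_add_eq_zero_left hw)
    rw [norm_neg, norm_smul, norm_smul, L.norm_map, Real.norm_of_nonneg (sub_nonneg.2 ht.2),
      Real.norm_of_nonneg ht.1] at this
    linarith
  rcases mul_eq_zero.1 hnorm with ht | hw0
  · obtain rfl : t = 1 / 2 := by linarith
    have : (1 / 2 : ℝ) • (w + L w) = 0 := by
      rw [smul_add]; convert hw using 2; norm_num
    exact hL w (eq_neg_of_add_eq_zero_right ((smul_eq_zero.1 this).resolve_left (by norm_num)))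
  · exact norm_eq_zero.1 hw0

theorem LinearIsometry.exists_continuousOn_lineMap_eq {W : Type*} [NormedAddCommGroup W]
    [NormedSpace ℝ W] [FiniteDimensional ℝ W] (L : W →ₗᵢ[ℝ] W) (hL : ∀ w, L w = -w → w = 0)
    (x : W) : ∃ g : ℝ → W, ContinuousOn g (Icc 0 1) ∧ g 0 = x ∧
      ∀ t ∈ Icc (0 : ℝ) 1, lineMap (g t) (L (g t)) t = x := by
  have := FiniteDimensional.complete ℝ W
  set R : ℝ → W →L[ℝ] W := fun t => lineMap 1 L.toContinuousLinearMap t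
  have hR : ∀ t w, R t w = lineMap w (L w) t := fun t w => by
    simp [R, lineMap_apply_module]
  have hunit : ∀ t ∈ Icc (0 : ℝ) 1, IsUnit (R t) := fun t ht =>
    ContinuousLinearMap.isUnit_iff_isUnit_toLinearMap.2 <|
      (LinearMap.isUnit_iff_ker_eq_bot _).2 <| LinearMap.ker_eq_bot'.2 fun w hw =>
        L.eq_zero_of_lineMap_eq_zero hL ht (by rw [← hR]; exact hw)
  refine ⟨fun t => Ring.inverse (R t) x, ?_, by simp [R], fun t ht => ?_⟩
  · refine ContinuousOn.clm_apply (fun t ht => ?_) continuousOn_const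
    have := NormedRing.inverse_continuousAt (hunit t ht).unit
    rw [IsUnit.unit_spec] at this
    exact (this.comp lineMap_continuous.continuousAt).continuousWithinAt
  · simpa [hR] using DFunLike.congr_fun (Ring.mul_inverse_cancel _ (hunit t ht)) x

section InnerProductSpace

variable {V : Type*} [NormedAddCommGroup V] [InnerProductSpace ℝ V]

theorem LinearIsometry.mem_orthogonal_eigenspace_neg_one (L : V →ₗᵢ[ℝ] V) {v : V}
    (hv : v ∈ (eigenspace L.toLinearMap (-1))ᗮ) : L v ∈ (eigenspace L.toLinearMap (-1))ᗮ := by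
  rw [Submodule.mem_orthogonal] at hv ⊢
  intro e he
  have hLe : L e = -e := by simpa using mem_eigenspace_iff.1 he
  calc inner ℝ e (L v) = inner ℝ (L (-e)) (L v) := by rw [map_neg, hLe, neg_neg]
    _ = 0 := by rw [L.inner_map_map, inner_neg_left, hv e he, neg_zero]

variable [FiniteDimensional ℝ V]

theorem LinearIsometry.exists_mem_frontier_mem_segment (L : V →ₗᵢ[ℝ] V) {A : Set V}
    (hA : IsBounded A) {x : V} (hxA : x ∈ A) (hxL : x ∉ L '' A) :
    ∃ a ∈ frontier A, x ∈ segment ℝ a (L a) := by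
  set E := eigenspace L.toLinearMap (-1)
  have hLE : ∀ e ∈ E, L e = -e := fun e he => by simpa using mem_eigenspace_iff.1 he
  obtain ⟨xE, hxE, xF, hxF, rfl⟩ := E.exists_add_mem_mem_orthogonal x
  have hF : ∀ v ∈ Eᗮ, L v ∈ Eᗮ := fun v => L.mem_orthogonal_eigenspace_neg_one
  have hLF : ∀ w, L.restrict hF w = -w → w = 0 := fun w hw => Subtype.ext <|
    Submodule.disjoint_def.1 E.orthogonal_disjoint w
      (mem_eigenspace_iff.2 (by simpa using congrArg Subtype.val hw)) w.2
  obtain ⟨gF, hgF_cont, hgF0, hgF⟩ := (L.restrict hF).exists_continuousOn_lineMap_eq hLF ⟨xF, hxF⟩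
  have hgF' : ∀ t ∈ Icc (0 : ℝ) 1, lineMap (gF t : V) (L (gF t)) t = xF := fun t ht => by
    simpa [lineMap_apply_module] using congrArg Subtype.val (hgF t ht)
  rcases eq_or_ne xE 0 with rfl | hxE0
  · rw [zero_add] at hxA hxL ⊢
    have h1 : (1 : ℝ) ∈ Icc 0 1 := right_mem_Icc.2 zero_le_one
    refine exists_mem_frontier_mem_segment_of_continuousOn isPreconnected_Icc subset_rfl
      (continuous_subtype_val.comp_continuousOn hgF_cont) hgF'
      ⟨xF, ⟨0, left_mem_Icc.2 zero_le_one, by simp [hgF0]⟩, hxA⟩ fun h => hxL ?_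
    exact ⟨gF 1, h ⟨1, h1, rfl⟩, by simpa using hgF' 1 h1⟩
  · set g : ℝ → V := fun t => (1 - 2 * t)⁻¹ • xE + gF t
    have hg_norm : ∀ t, ‖(1 - 2 * t)⁻¹ • xE‖ ≤ ‖g t‖ := fun t => by
      have h := norm_add_sq_eq_norm_sq_add_norm_sq_real (x := (1 - 2 * t)⁻¹ • xE) (y := gF t)
        (by rw [real_inner_smul_left, E.inner_right_of_mem_orthogonal hxE (gF t).2, mul_zero])
      refine (mul_self_le_mul_self_iff (norm_nonneg _) (norm_nonneg _)).2 ?_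
      simp only [g]
      rw [h]
      exact le_add_of_nonneg_right (mul_self_nonneg _)
    have hsub : Ico (0 : ℝ) (1 / 2) ⊆ Icc 0 1 :=
      Ico_subset_Icc_self.trans (Icc_subset_Icc_right (by norm_num))
    refine exists_mem_frontier_mem_segment_of_continuousOn (g := g) isPreconnected_Ico hsub ?_ ?_
      ⟨xE + xF, ⟨0, ⟨le_rfl, by norm_num⟩, by simp [g, hgF0]⟩, hxA⟩ ?_
    · refine ContinuousOn.add ?_ (continuous_subtype_val.comp_continuousOn (hgF_cont.mono hsub))
      exact (ContinuousOn.inv₀ (by fun_prop) fun t ht => by linarith [ht.2]).smul continuousOn_const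
    · intro t ht
      have hne : 1 - 2 * t ≠ 0 := by linarith [ht.2]
      rw [← hgF' t (hsub ht)]
      simp only [g, map_add, map_smul, hLE xE hxE, lineMap_apply_module]
      match_scalars
      · linear_combination mul_inv_cancel₀ hne
      all_goals ring
    · intro h
      obtain ⟨C, hC⟩ := hA.exists_norm_le
      obtain ⟨t, ht, hCt⟩ := exists_lt_inv_one_sub_two_mul (C / ‖xE‖)
      have := (hg_norm t).trans (hC _ (h ⟨t, ht, rfl⟩))
      rw [norm_smul, Real.norm_of_nonneg (inv_nonneg.2 (by linarith [ht.2]))] at this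
      linarith [(div_lt_iff₀ (norm_pos_iff.2 hxE0)).1 hCt]

theorem LinearIsometryEquiv.symmDiff_image_subset_iUnion_segment (L : V ≃ₗᵢ[ℝ] V) {A : Set V}
    (hA : IsBounded A) : symmDiff A (L '' A) ⊆ ⋃ a ∈ frontier A, segment ℝ a (L a) := by
  rintro x (⟨hxA, hxL⟩ | ⟨⟨b, hbA, rfl⟩, hbA'⟩)
  · obtain ⟨a, ha, hxa⟩ := L.toLinearIsometry.exists_mem_frontier_mem_segment hA hxA hxL
    exact mem_biUnion ha hxa
  · have hb : b ∉ L.symm '' A := by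
      rintro ⟨a, haA, rfl⟩
      exact hbA' (by rwa [L.apply_symm_apply])
    obtain ⟨a, ha, hba⟩ := L.symm.toLinearIsometry.exists_mem_frontier_mem_segment hA hbA hb
    refine mem_biUnion ha ?_
    have hx := image_segment ℝ (L : V →ₗ[ℝ] V).toAffineMap a (L.symm a) ▸ mem_image_of_mem L hba
    simpa [segment_symm] using hx

end InnerProductSpace

/-- For a bounded set `A ⊆ ℝ^d` and a rotation matrix `M ∈ SO(d)`, the
symmetric difference `A △ MA` is covered by the union of the segments `ℓ(a, Ma)`
over `a ∈ ∂A`. -/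
theorem symmDiff_rotate_subset_iUnion_segment
    (d : ℕ) (A : Set (EuclideanSpace ℝ (Fin d))) (hA : Bornology.IsBounded A)
    (M : Matrix (Fin d) (Fin d) ℝ) (hM : M ∈ Matrix.specialOrthogonalGroup (Fin d) ℝ) :
    symmDiff A (Matrix.toEuclideanLin M '' A) ⊆
      ⋃ a ∈ frontier A, segment ℝ a (Matrix.toEuclideanLin M a) := by
  have hM' : Matrix.toEuclideanCLM (n := Fin d) (𝕜 := ℝ) M ∈ unitary _ :=
    Unitary.map_mem _ (Matrix.mem_specialOrthogonalGroup_iff.1 hM).1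
  exact (Unitary.linearIsometryEquiv ⟨_, hM'⟩).symmDiff_image_subset_iUnion_segment hA
end
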